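/- The Lucas number L_m is a perfect square if and only if m = 1 or m = 3. -/
import Mathlib

def lucas : ℕ → ℕ
  | 0 => 2
  | 1 => 1
  | n + 2 => lucas (n + 1) + lucas n

noncomputable def Lz (n : ℕ) : ℤ := (lucas n : ℤ)

lemma Lz_add_two (n : ℕ) : Lz (n+2) = Lz (n+1) + Lz n := by
  simp [Lz, lucas]

-- Catalan-type identity
lemma lucas_catalan (k : ℕ) : Lz (k+1)^2 - Lz k * Lz (k+2) = 5 * (-1:ℤ)^(k+1) := by
  induction k with
  | zero => simp [Lz, lucas]
  | succ n ih =>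
    have h1 := Lz_add_two n
    have h2 := Lz_add_two (n+1)
    simp only [pow_succ] at ih ⊢
    rw [show n+1+2 = (n+1)+2 from rfl, h2, h1] at *
    nlinarith [ih]

-- Doubling formulas
lemma doubling (k : ℕ) : Lz (2*k) = Lz k ^ 2 - 2 * (-1:ℤ)^k ∧
    Lz (2*k+1) = Lz k * Lz (k+1) - (-1:ℤ)^k := by
  induction k with
  | zero => constructor <;> simp [Lz, lucas]
  | succ n ih =>
    obtain ⟨hA, hB⟩ := ih
    have hcat := lucas_catalan n
    have h1 := Lz_add_two n
    have e1 : Lz (2*(n+1)) = Lz (2*n+1) + Lz (2*n) := by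
      rw [show 2*(n+1) = (2*n)+2 by ring]; exact Lz_add_two _
    have e2 : Lz (2*(n+1)+1) = Lz (2*(n+1)) + Lz (2*n+1) := by
      rw [show 2*(n+1)+1 = (2*n+1)+2 by ring, show 2*(n+1) = 2*n+1+1 by ring]
      exact Lz_add_two _
    simp only [pow_succ] at hcat ⊢
    rw [h1] at hcat
    constructor
    · rw [e1, hA, hB]; nlinarith [hcat]
    · rw [e2, e1, hA, hB, h1]; nlinarith [hcat]

-- L_{m+2k} = L_k * L_{m+k} - (-1)^k L_m
lemma shift (k m : ℕ) : Lz (m + 2*k) = Lz k * Lz (m+k) - (-1:ℤ)^k * Lz m := by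
  induction m using Nat.twoStepInduction with
  | zero =>
    obtain ⟨hA, _⟩ := doubling k
    simp only [Nat.zero_add]
    rw [hA, show Lz 0 = 2 from rfl]; ring
  | one =>
    obtain ⟨_, hB⟩ := doubling k
    rw [show 1 + 2*k = 2*k+1 by ring, hB, show 1+k = k+1 by ring]
    simp [Lz, lucas]
  | more n ih1 ih2 =>
    rw [show n+2+2*k = (n+1+2*k)+1 by ring,
        show (n+1+2*k)+1 = (n+2*k)+2 by ring, Lz_add_two,
        show n+2*k+1 = n+1+2*k by ring, ih1, ih2,
        show n+2+k = (n+k)+2 by ring, Lz_add_two,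
        show n+2 = n+2 from rfl, show Lz (n+2) = Lz (n+1) + Lz n from Lz_add_two n,
        show n+1+k = (n+k)+1 by ring]
    ring

-- iterated congruence: for k even, L_{m+2tk} ≡ (-1)^t L_m  (mod L_k)
lemma cong (k : ℕ) (hk : k % 2 = 0) (t m : ℕ) :
    Lz k ∣ Lz (m + 2*t*k) - (-1:ℤ)^t * Lz m := by
  induction t with
  | zero => simp
  | succ n ih =>
    have hs := shift k (m + 2*n*k)
    rw [show m + 2*n*k + 2*k = m + 2*(n+1)*k by ring] at hs
    have hek : (-1:ℤ)^k = 1 := by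
      rw [← Nat.div_add_mod k 2, hk]; simp [pow_mul]
    rw [hek, one_mul] at hs
    have : Lz (m + 2*(n+1)*k) - (-1:ℤ)^(n+1) * Lz m =
        Lz k * Lz (m + 2*n*k + k) - (Lz (m + 2*n*k) - (-1:ℤ)^n * Lz m) := by
      rw [hs]; ring
    rw [this]
    exact dvd_sub (Dvd.intro _ rfl) ih

lemma lucas_mod4_period (n : ℕ) : lucas (n+6) % 4 = lucas n % 4 := by
  have h : lucas (n+6) = 8 * lucas (n+1) + 5 * lucas n := by
    show lucas (n+4+2) = _
    rw [lucas, show n+4+1 = n+3+2 from rfl, lucas, show n+4 = n+2+2 from rfl, lucas,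
        show n+3 = n+1+2 from rfl, lucas, show n+2 = n+2 from rfl, lucas]
    ring
  omega

lemma lucas_mod4 (k : ℕ) (hk : k % 6 = 2 ∨ k % 6 = 4) : lucas k % 4 = 3 := by
  induction k using Nat.strong_induction_on with
  | _ k ih =>
    rcases Nat.lt_or_ge k 6 with h | h
    · interval_cases k <;> simp_all <;> rfl
    · obtain ⟨j, rfl⟩ : ∃ j, k = j + 6 := ⟨k - 6, by omega⟩
      rw [lucas_mod4_period]
      exact ih j (by omega) (by omega)

lemma exists_prime_3mod4 (n : ℕ) (hn : n % 4 = 3) :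
    ∃ p, p.Prime ∧ p ∣ n ∧ p % 4 = 3 := by
  induction n using Nat.strong_induction_on with
  | _ n ih =>
    have hn1 : n ≠ 1 := by omega
    have hp := Nat.minFac_prime hn1
    set p := n.minFac with hpdef
    have hpd : p ∣ n := Nat.minFac_dvd n
    have hp2 : p ≠ 2 := by
      intro h2e
      have h2d : (2:ℕ) ∣ n := h2e ▸ hpd
      obtain ⟨c, hc⟩ := h2d
      omega
    have hp1 := hp.two_le
    have hpodd : p % 2 = 1 := hp.eq_two_or_odd.resolve_left hp2
    rcases Nat.lt_or_ge (p % 4) 3 with h4 | h4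
    · have hp41 : p % 4 = 1 := by omega
      obtain ⟨m, hm⟩ := hpd
      have hm4 : m % 4 = 3 := by
        have := Nat.mul_mod p m 4
        rw [hp41, ← hm] at this
        omega
      have hm0 : 0 < m := by
        rcases m with _ | m
        · omega
        · omega
      have hmlt : m < n := by
        rw [hm]
        calc m = 1 * m := (one_mul m).symm
        _ < p * m := by
          have : (1:ℕ) < p := by omega
          exact Nat.mul_lt_mul_of_lt_of_le this (le_refl m) hm0
      obtain ⟨q, hq, hqd, hq4⟩ := ih m hmlt hm4
      exact ⟨q, hq, hm ▸ hqd.mul_left p, hq4⟩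
    · have : p % 4 = 3 := by
        have := Nat.mod_lt p (show 0 < 4 by norm_num)
        omega
      exact ⟨p, hp, hpd, this⟩

lemma sq_mod4 (x : ℤ) : x^2 % 4 = 0 ∨ x^2 % 4 = 1 := by
  rcases Int.even_or_odd x with ⟨c, rfl⟩ | ⟨c, rfl⟩
  · left; rw [show (c+c)^2 = 4*(c*c) by ring, Int.mul_emod_right]
  · right; rw [show (2*c+1)^2 = 1 + 4*(c*c+c) by ring, Int.add_mul_emod_self_left]
    rfl

lemma no_sq_neg_one (p : ℕ) (hp : p.Prime) (hp4 : p % 4 = 3) (x : ℤ)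
    (h : (p:ℤ) ∣ x^2 + 1) : False := by
  haveI : Fact p.Prime := ⟨hp⟩
  have h0 : ((x^2 + 1 : ℤ) : ZMod p) = 0 := by
    rwa [ZMod.intCast_zmod_eq_zero_iff_dvd]
  push_cast at h0
  have hsq : IsSquare (-1 : ZMod p) := ⟨(x : ZMod p), by linear_combination -h0⟩
  exact (ZMod.exists_sq_eq_neg_one_iff.mp hsq) hp4

lemma no_sq_neg_four (p : ℕ) (hp : p.Prime) (hp4 : p % 4 = 3) (x : ℤ)
    (h : (p:ℤ) ∣ x^2 + 4) : False := by
  haveI : Fact p.Prime := ⟨hp⟩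
  have h0 : ((x^2 + 4 : ℤ) : ZMod p) = 0 := by
    rwa [ZMod.intCast_zmod_eq_zero_iff_dvd]
  push_cast at h0
  have hp2 : p ≠ 2 := by omega
  have h2 : (2 : ZMod p) ≠ 0 := by
    intro hc
    have hc2 : ((2:ℕ) : ZMod p) = 0 := by push_cast; exact hc
    rw [ZMod.natCast_eq_zero_iff] at hc2
    have := Nat.le_of_dvd (by norm_num) hc2
    omega
  have hsq : IsSquare (-1 : ZMod p) := by
    refine ⟨(x : ZMod p) * 2⁻¹, ?_⟩
    have h4 : ((x : ZMod p))^2 = -4 := by linear_combination h0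
    field_simp
    linear_combination -h4
  exact (ZMod.exists_sq_eq_neg_one_iff.mp hsq) hp4

lemma odd_aux (m0 n : ℕ) (x : ℤ) (hlt : m0 < n) (h4 : (n - m0) % 4 = 0)
    (hx : Lz n = x^2) :
    ∃ p : ℕ, p.Prime ∧ p % 4 = 3 ∧ (p:ℤ) ∣ x^2 + Lz m0 := by
  set s := (n - m0) / 2 with hsdef
  have hs2 : s % 2 = 0 := by omega
  have hs0 : s ≠ 0 := by omega
  obtain ⟨r, k, h3k, hs⟩ := Nat.exists_eq_pow_mul_and_not_dvd hs0 3 (by norm_num)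
  have h3odd : 3 ^ r % 2 = 1 := by
    rw [Nat.pow_mod]
    norm_num
  have hk2 : k % 2 = 0 := by
    have := Nat.mul_mod (3^r) k 2
    rw [← hs, h3odd] at this
    omega
  have hk3 : k % 3 ≠ 0 := fun h => h3k (Nat.dvd_of_mod_eq_zero h)
  have hk6 : k % 6 = 2 ∨ k % 6 = 4 := by omega
  have hl4 : lucas k % 4 = 3 := lucas_mod4 k hk6
  obtain ⟨p, hp, hpd, hp4⟩ := exists_prime_3mod4 (lucas k) hl4
  have hn : m0 + 2 * 3^r * k = n := by
    have h2 : 2 * 3^r * k = 2 * (3^r * k) := by ring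
    rw [h2, ← hs]
    omega
  have hcong := cong k hk2 (3^r) m0
  rw [hn] at hcong
  have hodd : Odd (3^r) := Odd.pow ⟨1, by norm_num⟩
  rw [hodd.neg_one_pow] at hcong
  have hdvd : Lz k ∣ x^2 + Lz m0 := by
    have : Lz n - (-1) * Lz m0 = x^2 + Lz m0 := by rw [hx]; ring
    rwa [this] at hcong
  refine ⟨p, hp, hp4, dvd_trans ?_ hdvd⟩
  simpa [Lz] using Int.natCast_dvd_natCast.mpr hpd

theorem stmt19 (m : ℕ) : (∃ x : ℕ, lucas m = x ^ 2) ↔ m = 1 ∨ m = 3 := by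
  constructor
  · rintro ⟨x, hx⟩
    by_contra hc
    push_neg at hc
    obtain ⟨h1, h3⟩ := hc
    have hxz : Lz m = (x:ℤ)^2 := by
      unfold Lz
      exact_mod_cast congrArg (Nat.cast : ℕ → ℤ) hx
    rcases Nat.even_or_odd m with ⟨j, hj⟩ | hodd
    · -- even case
      have hm : m = 2*j := by omega
      obtain ⟨hA, _⟩ := doubling j
      rw [← hm] at hA
      rw [hxz] at hA
      have key : (x:ℤ)^2 = Lz j^2 - 2 ∨ (x:ℤ)^2 = Lz j^2 + 2 := by
        rcases Nat.even_or_odd j with hj2 | hj2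
        · left; rw [hA, hj2.neg_one_pow]; ring
        · right; rw [hA, hj2.neg_one_pow]; ring
      have s1 := sq_mod4 (x:ℤ)
      have s2 := sq_mod4 (Lz j)
      generalize hga : ((x:ℤ))^2 = a at key s1
      generalize hgb : (Lz j)^2 = b at key s2
      omega
    · -- odd case
      have h2 : m % 2 = 1 := Nat.odd_iff.mp hodd
      rcases (by omega : m % 4 = 1 ∨ m % 4 = 3) with h4 | h4
      · have hlt : 1 < m := by omega
        obtain ⟨p, hp, hp4, hdvd⟩ := odd_aux 1 m (x:ℤ) hlt (by omega) hxz
        exact no_sq_neg_one p hp hp4 x (by rwa [show Lz 1 = 1 from rfl] at hdvd)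
      · have hlt : 3 < m := by omega
        obtain ⟨p, hp, hp4, hdvd⟩ := odd_aux 3 m (x:ℤ) hlt (by omega) hxz
        exact no_sq_neg_four p hp hp4 x (by rwa [show Lz 3 = 4 from rfl] at hdvd)
  · rintro (rfl | rfl)
    · exact ⟨1, rfl⟩
    · exact ⟨2, rfl⟩
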